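/- Let L : ℝⁿ × ℝⁿ × ℝ → ℝ be continuously differentiable with (∂L/∂S)(q, v, S) < 0 everywhere, and F^fr : ℝⁿ × ℝⁿ × ℝ → ℝⁿ. On M := ℝⁿ × ℝ × ℝⁿ × ℝⁿ with points m = (q, S, v, p), define Δ_M(m) := {(δq, δS, δv, δp) : (δq, δS) ∈ C_V(q, v, S)}, the presymplectic form ω_M((a, σ, b, c), (a′, σ′, b′, c′)) := ⟨a, c′⟩ − ⟨a′, c⟩, and the generalized energy E(m) := ⟨p, v⟩ − L(q, v, S), whose differential identified with a vector is dE(m) = (−∂L/∂q, −∂L/∂S, p − ∂L/∂v, v). Then a C¹ curve m(t) = (q(t), S(t), v(t), p(t)) satisfies the Dirac dynamical system (ṁ(t), dE(m(t))) ∈ D(ω_M, Δ_M(m(t))) for all t if and only if for all t: ṗ − (∂L/∂q)(q, v, S) = F^fr(q, v, S), (∂L/∂S)(q, v, S)·Ṡ = ⟨F^fr(q, v, S), q̇⟩, p = (∂L/∂v)(q, v, S), and v = q̇. -/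
import Mathlib


open scoped RealInnerProductSpace

noncomputable section

/-- `ℝⁿ` with the Euclidean inner product. -/
abbrev E (n : ℕ) : Type := EuclideanSpace ℝ (Fin n)

/-- The bundle `M = TQ ⊕ T*Q` over `𝒬 = ℝⁿ × ℝ`, with points `m = (q, S, v, p)`. -/
abbrev M (n : ℕ) : Type := E n × ℝ × E n × E n

/-- Gradient `∂L/∂q` of the Lagrangian `L(q, v, S)`. -/
noncomputable def gQ {n : ℕ} (L : E n → E n → ℝ → ℝ) (q v : E n) (S : ℝ) : E n :=
  gradient (fun x => L x v S) q

/-- Gradient `∂L/∂v` of the Lagrangian `L(q, v, S)`. -/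
noncomputable def gV {n : ℕ} (L : E n → E n → ℝ → ℝ) (q v : E n) (S : ℝ) : E n :=
  gradient (fun y => L q y S) v

/-- Partial derivative `∂L/∂S` of the Lagrangian `L(q, v, S)`. -/
noncomputable def LS {n : ℕ} (L : E n → E n → ℝ → ℝ) (q v : E n) (S : ℝ) : ℝ :=
  deriv (L q v) S

/-- The Dirac structure induced by a form `ω` and a subspace `Δ`, covectors being
identified with vectors via the pairing `pair` (the Euclidean inner product). -/
def Dirac {F : Type*} (pair ω : F → F → ℝ) (Δ : Set F) : Set (F × F) :=
  {p | p.1 ∈ Δ ∧ ∀ w ∈ Δ, pair p.2 w = ω p.1 w}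

/-- Euclidean pairing on `M`. -/
def pairM {n : ℕ} (ζ w : M n) : ℝ :=
  ⟪ζ.1, w.1⟫ + ζ.2.1 * w.2.1 + ⟪ζ.2.2.1, w.2.2.1⟫ + ⟪ζ.2.2.2, w.2.2.2⟫

/-- Presymplectic form `ω_M((a,σ,b,c),(a',σ',b',c')) = ⟨a,c'⟩ − ⟨a',c⟩` on `M`,
the pullback of the canonical symplectic form on the mechanical phase space. -/
def omegaM {n : ℕ} (x y : M n) : ℝ :=
  ⟪x.1, y.2.2.2⟫ - ⟪y.1, x.2.2.2⟫

/-- the Dirac dynamical system on `M = TQ ⊕ T*Q`, with generalized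
energy `E(m) = ⟨p,v⟩ − L(q,v,S)`, is equivalent to the implicit
differential-algebraic equations for the thermodynamics of simple systems. -/
theorem statement13 {n : ℕ} (L : E n → E n → ℝ → ℝ)
    (hL : ContDiff ℝ 1 (fun x : E n × E n × ℝ => L x.1 x.2.1 x.2.2))
    (hLS : ∀ (q v : E n) (S : ℝ), LS L q v S < 0)
    (Ffr : E n → E n → ℝ → E n)
    (q v p : ℝ → E n) (S : ℝ → ℝ)
    (hq : ContDiff ℝ 1 q) (hv : ContDiff ℝ 1 v) (hp : ContDiff ℝ 1 p)
    (hS : ContDiff ℝ 1 S) :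
    (∀ t : ℝ,
      ((⟨deriv q t, deriv S t, deriv v t, deriv p t⟩ : M n),
       (⟨-(gQ L (q t) (v t) (S t)), -(LS L (q t) (v t) (S t)),
          p t - gV L (q t) (v t) (S t), v t⟩ : M n)) ∈
        Dirac pairM omegaM
          {δ : M n | LS L (q t) (v t) (S t) * δ.2.1 = ⟪Ffr (q t) (v t) (S t), δ.1⟫}) ↔
    (∀ t : ℝ,
      deriv p t - gQ L (q t) (v t) (S t) = Ffr (q t) (v t) (S t) ∧
      LS L (q t) (v t) (S t) * deriv S t = ⟪Ffr (q t) (v t) (S t), deriv q t⟫ ∧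
      p t = gV L (q t) (v t) (S t) ∧ v t = deriv q t) := by
  constructor
  · intro h t
    obtain ⟨h1, h2⟩ := h t
    have hls : LS L (q t) (v t) (S t) ≠ 0 := (hLS (q t) (v t) (S t)).ne
    have hb : p t = gV L (q t) (v t) (S t) := by
      have hm : ((⟨0, 0, p t - gV L (q t) (v t) (S t), 0⟩ : M n)) ∈
          {δ : M n | LS L (q t) (v t) (S t) * δ.2.1 = ⟪Ffr (q t) (v t) (S t), δ.1⟫} := by
        simp [Set.mem_setOf_eq]
      have hthis := h2 _ hm
      simp only [pairM, omegaM, inner_zero_right, inner_zero_left, mul_zero, add_zero,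
        zero_add, zero_sub, sub_zero, neg_zero, sub_self] at hthis
      have h0 : p t - gV L (q t) (v t) (S t) = 0 := by
        rw [← @inner_self_eq_zero ℝ]
        linarith
      rw [sub_eq_zero] at h0
      exact h0
    have hc : v t = deriv q t := by
      have hm : ((⟨0, 0, 0, v t - deriv q t⟩ : M n)) ∈
          {δ : M n | LS L (q t) (v t) (S t) * δ.2.1 = ⟪Ffr (q t) (v t) (S t), δ.1⟫} := by
        simp [Set.mem_setOf_eq]
      have hthis := h2 _ hm
      simp only [pairM, omegaM, inner_zero_right, inner_zero_left, mul_zero, add_zero,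
        zero_add, zero_sub, sub_zero, neg_zero, sub_neg_eq_add, neg_neg] at hthis
      have h0 : v t - deriv q t = 0 := by
        rw [← @inner_self_eq_zero ℝ, inner_sub_left]
        linarith
      rw [sub_eq_zero] at h0
      exact h0
    have ha : deriv p t - gQ L (q t) (v t) (S t) = Ffr (q t) (v t) (S t) := by
      set a : E n := deriv p t - gQ L (q t) (v t) (S t) - Ffr (q t) (v t) (S t) with ha
      have hm : ((⟨a, ⟪Ffr (q t) (v t) (S t), a⟫ / LS L (q t) (v t) (S t), 0, 0⟩ : M n)) ∈
          {δ : M n | LS L (q t) (v t) (S t) * δ.2.1 = ⟪Ffr (q t) (v t) (S t), δ.1⟫} := by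
        simp only [Set.mem_setOf_eq]
        field_simp
      have hthis := h2 _ hm
      have hcancel : LS L (q t) (v t) (S t) *
          (⟪Ffr (q t) (v t) (S t), a⟫ / LS L (q t) (v t) (S t)) = ⟪Ffr (q t) (v t) (S t), a⟫ := by
        field_simp
      simp only [pairM, omegaM, inner_zero_right, inner_zero_left, mul_zero, add_zero,
        zero_add, zero_sub, sub_zero, neg_zero, inner_neg_left, neg_mul] at hthis
      rw [hcancel] at hthis
      have hz : (⟪a, a⟫ : ℝ) = 0 := by
        conv_lhs => rw [ha]
        rw [inner_sub_left, inner_sub_left]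
        have := real_inner_comm a (deriv p t)
        linarith
      have h0 : a = 0 := inner_self_eq_zero.mp hz
      rw [ha, sub_eq_zero] at h0
      exact h0
    exact ⟨ha, h1, hb, hc⟩
  · intro h t
    obtain ⟨h1, h2, h3, h4⟩ := h t
    refine ⟨h2, ?_⟩
    rintro ⟨a, σ, b, c⟩ hw
    simp only [Set.mem_setOf_eq] at hw
    rw [h4] at h1 h3 hw
    have hpf : deriv p t = gQ L (q t) (deriv q t) (S t) + Ffr (q t) (deriv q t) (S t) := by
      rw [← h1]; abel
    have e1 : p t - gV L (q t) (deriv q t) (S t) = 0 := by rw [h3, sub_self]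
    simp only [pairM, omegaM, h4, e1, inner_zero_left, add_zero, inner_neg_left, neg_mul,
      hpf, inner_add_right]
    have c1 := real_inner_comm a (gQ L (q t) (deriv q t) (S t))
    have c2 := real_inner_comm a (Ffr (q t) (deriv q t) (S t))
    linarith

end
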